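/- If G is a (P₃ ∪ P₂, diamond)-free graph with clique number ω = 4, then χ(G) ≤ 5. -/

import Mathlib

open SimpleGraph

/-- `H` occurs as an induced subgraph of `G`. -/
def IsInducedCopy {α β : Type*} (H : SimpleGraph α) (G : SimpleGraph β) : Prop :=
  ∃ f : α ↪ β, ∀ a b : α, G.Adj (f a) (f b) ↔ H.Adj a b

/-- `G` is `H`-free: no induced copy of `H`. -/
def Free {α β : Type*} (G : SimpleGraph α) (H : SimpleGraph β) : Prop :=
  ¬ IsInducedCopy H G

/-- `P₃ ∪ P₂`: disjoint union of a path on 3 vertices and an edge. -/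
def P3UP2 : SimpleGraph (Fin 5) :=
  SimpleGraph.fromRel (fun a b => (a, b) ∈ [((0 : Fin 5), (1 : Fin 5)), (1, 2), (3, 4)])

/-- The diamond: `K₄` minus an edge. -/
def diamondG : SimpleGraph (Fin 4) :=
  SimpleGraph.fromRel (fun a b =>
    (a, b) ∈ [((0 : Fin 4), (2 : Fin 4)), (0, 3), (1, 2), (1, 3), (2, 3)])

/-- `2K₂`: two disjoint edges. -/
def twoK2 : SimpleGraph (Fin 4) :=
  SimpleGraph.fromRel (fun a b => (a, b) ∈ [((0 : Fin 4), (1 : Fin 4)), (2, 3)])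

/-- `P₄ ∪ P₂`. -/
def P4UP2 : SimpleGraph (Fin 6) :=
  SimpleGraph.fromRel (fun a b =>
    (a, b) ∈ [((0 : Fin 6), (1 : Fin 6)), (1, 2), (2, 3), (4, 5)])

/-- The cycle on `n` vertices (for `n ≥ 3`), as a graph on `ZMod n`. -/
def cycG (n : ℕ) : SimpleGraph (ZMod n) :=
  SimpleGraph.fromRel (fun a b => b = a + 1)

/-- A graph is perfect if every induced subgraph has chromatic number
equal to its clique number. -/
def IsPerfect {V : Type*} (G : SimpleGraph V) : Prop :=
  ∀ s : Set V, (G.induce s).chromaticNumber = ((G.induce s).cliqueNum : ℕ∞)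

/-- The set `C_{ij}` attached to a maximum clique enumerated by `f : Fin ω ↪ V`:
vertices outside the clique, non-adjacent to both `f i` and `f j`, where `(i,j)`
is the lexicographically least such pair (this closed form is equivalent to the
iterative definition removing earlier `C`-sets). -/
def Cset {V : Type*} (G : SimpleGraph V) {ω : ℕ} (f : Fin ω ↪ V) (i j : Fin ω) : Set V :=
  {v | v ∉ Set.range f ∧ ¬ G.Adj v (f i) ∧ ¬ G.Adj v (f j) ∧
    ∀ p q : Fin ω, p < q → ¬ G.Adj v (f p) → ¬ G.Adj v (f q) →
      i < p ∨ (i = p ∧ j ≤ q)}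

/-- The set `I_a` attached to a maximum clique enumerated by `f : Fin ω ↪ V`:
vertices outside the clique adjacent to every clique vertex except `f k`. -/
def Iset {V : Type*} (G : SimpleGraph V) {ω : ℕ} (f : Fin ω ↪ V) (k : Fin ω) : Set V :=
  {v | v ∉ Set.range f ∧ ¬ G.Adj v (f k) ∧ ∀ l : Fin ω, l ≠ k → G.Adj v (f l)}

/-!
Fix a maximum clique `Q`, so `|Q| = 4`. A vertex outside `Q` has at most one neighbour in `Q`:
two would give a diamond or a `K₅`. If `x - z - y` is an induced path outside `Q`, every edge of
`Q` must meet a neighbour of the path (otherwise there is an induced `P₃ ∪ P₂`), so `x`, `z`, `y`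
see three distinct vertices of `Q`. For `v ∉ Q` with two non-adjacent neighbours `x`, `y` outside
`Q`, this forces every further neighbour of `v` outside `Q` onto the fourth vertex of `Q`, and two
such neighbours would again give a diamond or an induced path. Hence `v` has at most three
neighbours outside `Q` (if they are pairwise adjacent, `K₅`-freeness bounds them), so every vertex
outside `Q` has degree at most 4, and colouring `Q` first and then the rest greedily uses 5 colours.
-/

section

variable {V : Type*} {G : SimpleGraph V}

theorem isInducedCopy_of_injective {α : Type*} {H : SimpleGraph α} {f : α → V}
    (hf : Function.Injective f) (hadj : ∀ a b, G.Adj (f a) (f b) ↔ H.Adj a b) :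
    IsInducedCopy H G :=
  ⟨⟨f, hf⟩, hadj⟩

theorem Free.adj_of_diamondG (h : _root_.Free G diamondG) {a b c d : V} (hab : a ≠ b)
    (hac : G.Adj a c) (had : G.Adj a d) (hbc : G.Adj b c) (hbd : G.Adj b d)
    (hcd : G.Adj c d) : G.Adj a b := by
  by_contra hnab
  refine h (isInducedCopy_of_injective (f := ![a, b, c, d]) ?_ fun i j => ?_)
  · intro i j hij
    fin_cases i <;> fin_cases j <;> simp_all [G.adj_comm, G.ne_of_adj]
  · fin_cases i <;> fin_cases j <;> simp_all [diamondG, G.adj_comm]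

theorem Free.false_of_P3UP2 (h : _root_.Free G P3UP2) {a b c d e : V}
    (hab : G.Adj a b) (hbc : G.Adj b c) (hde : G.Adj d e) (hac : a ≠ c) (hnac : ¬ G.Adj a c)
    (had : ¬ G.Adj a d) (hae : ¬ G.Adj a e) (hbd : ¬ G.Adj b d) (hbe : ¬ G.Adj b e)
    (hcd : ¬ G.Adj c d) (hce : ¬ G.Adj c e) : False := by
  refine h (isInducedCopy_of_injective (f := ![a, b, c, d, e]) ?_ fun i j => ?_)
  · intro i j hij
    fin_cases i <;> fin_cases j <;> simp_all [G.adj_comm, G.ne_of_adj]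
  · fin_cases i <;> fin_cases j <;> simp_all [P3UP2, G.adj_comm]

theorem Finset.exists_ne_of_three_le_card_union {α : Type*} [DecidableEq α] {s t u : Finset α}
    (hs : s.card ≤ 1) (ht : t.card ≤ 1) (hu : u.card ≤ 1) (h : 3 ≤ (s ∪ t ∪ u).card) :
    ∃ a ∈ s, ∃ b ∈ t, ∃ c ∈ u, a ≠ b ∧ a ≠ c ∧ b ≠ c := by
  have hsum : (s ∪ t ∪ u).card ≤ s.card + t.card + u.card :=
    (card_union_le _ _).trans (Nat.add_le_add_right (card_union_le s t) _)
  obtain ⟨a, rfl⟩ := card_eq_one.1 (by omega : s.card = 1)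
  obtain ⟨b, rfl⟩ := card_eq_one.1 (by omega : t.card = 1)
  obtain ⟨c, rfl⟩ := card_eq_one.1 (by omega : u.card = 1)
  refine ⟨a, mem_singleton_self a, b, mem_singleton_self b, c, mem_singleton_self c, ?_, ?_, ?_⟩ <;>
    rintro rfl <;> simp at h <;>
    exact absurd (h.trans card_le_two) (by norm_num)

theorem SimpleGraph.colorable_succ_of_degree_le_of_notMem [Fintype V] [DecidableRel G.Adj]
    {k : ℕ} (s : Finset V) (hs : s.card ≤ k + 1) (hdeg : ∀ v ∉ s, G.degree v ≤ k) :
    G.Colorable (k + 1) := by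
  classical
  suffices ∀ t : Finset V, ∃ c : V → Fin (k + 1),
      ∀ u ∈ s ∪ t, ∀ w ∈ s ∪ t, G.Adj u w → c u ≠ c w by
    obtain ⟨c, hc⟩ := this Finset.univ
    exact ⟨Coloring.mk c fun {u w} huw => hc u (by simp) w (by simp) huw⟩
  intro t
  induction t using Finset.induction_on with
  | empty =>
    obtain ⟨e⟩ : Nonempty (s ↪ Fin (k + 1)) :=
      Function.Embedding.nonempty_of_card_le (by simpa using hs)
    refine ⟨fun v => if h : v ∈ s then e ⟨v, h⟩ else 0, fun u hu w hw huw => ?_⟩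
    rw [Finset.union_empty] at hu hw
    simp only [dif_pos hu, dif_pos hw, ne_eq, e.injective.eq_iff, Subtype.mk.injEq]
    exact huw.ne
  | insert a t _ ih =>
    obtain ⟨c, hc⟩ := ih
    by_cases has : a ∈ s
    · refine ⟨c, ?_⟩
      rwa [Finset.union_insert, Finset.insert_eq_of_mem (Finset.mem_union_left _ has)]
    obtain ⟨col, -, hcol⟩ := Finset.exists_mem_notMem_of_card_lt_card
      (s := (G.neighborFinset a).image c) (t := Finset.univ) <| by
        calc ((G.neighborFinset a).image c).card ≤ G.degree a := Finset.card_image_le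
          _ < _ := by simpa using Nat.lt_succ_of_le (hdeg a has)
    have hfree : ∀ w, G.Adj a w → col ≠ c w := fun w h heq =>
      hcol (Finset.mem_image.2 ⟨w, by simpa using h, heq.symm⟩)
    refine ⟨Function.update c a col, fun u hu w hw huw => ?_⟩
    rcases eq_or_ne u a with rfl | hua
    · rw [Function.update_self, Function.update_of_ne huw.ne.symm]
      exact hfree w huw
    rcases eq_or_ne w a with rfl | hwa
    · rw [Function.update_self, Function.update_of_ne hua]
      exact (hfree u huw.symm).symm
    rw [Function.update_of_ne hua, Function.update_of_ne hwa]
    exact hc u (by simp_all) w (by simp_all) huw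

theorem SimpleGraph.IsNClique.eq_of_adj_of_adj {n : ℕ} {Q : Finset V} (hQ : G.IsNClique n Q)
    (hD : _root_.Free G diamondG) (hK : G.CliqueFree (n + 1)) {u a b : V} (hu : u ∉ Q)
    (ha : a ∈ Q) (hb : b ∈ Q) (hua : G.Adj u a) (hub : G.Adj u b) : a = b := by
  classical
  by_contra hab
  obtain ⟨k, hk, huk⟩ : ∃ k ∈ Q, ¬ G.Adj u k := by
    by_contra! hall
    exact hK _ (hQ.insert hall)
  have hku : u ≠ k := fun h => hu (h ▸ hk)
  refine huk (hD.adj_of_diamondG hku hua hub ?_ ?_ (hQ.isClique ha hb hab))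
  · exact hQ.isClique hk ha (fun h => huk (h ▸ hua))
  · exact hQ.isClique hk hb (fun h => huk (h ▸ hub))

section FourClique

variable {Q : Finset V} (hP : _root_.Free G P3UP2) (hD : _root_.Free G diamondG)
  (hK : G.CliqueFree 5) (hQ : G.IsNClique 4 Q)
include hP hD hK hQ

theorem exists_adj_of_induced_path {x z y : V} (hx : x ∉ Q) (hz : z ∉ Q) (hy : y ∉ Q)
    (hxz : G.Adj x z) (hzy : G.Adj z y) (hxy : ¬ G.Adj x y) (hxy' : x ≠ y) :
    ∃ a ∈ Q, ∃ b ∈ Q, ∃ c ∈ Q, a ≠ b ∧ a ≠ c ∧ b ≠ c ∧ G.Adj x a ∧ G.Adj z b ∧ G.Adj y c := by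
  classical
  have hle_one : ∀ {u}, u ∉ Q → (Q.filter (G.Adj u)).card ≤ 1 := fun hu =>
    Finset.card_le_one.2 fun a ha b hb => by
      rw [Finset.mem_filter] at ha hb
      exact hQ.eq_of_adj_of_adj hD hK hu ha.1 hb.1 ha.2 hb.2
  set A := Q.filter (G.Adj x) ∪ Q.filter (G.Adj z) ∪ Q.filter (G.Adj y)
  -- any edge of `Q` missed by `x`, `z`, `y` would complete an induced `P₃ ∪ P₂`
  have hmissed : (Q \ A).card ≤ 1 := Finset.card_le_one.2 fun d hd e he => by
    by_contra hde
    simp only [A, Finset.mem_sdiff, Finset.mem_union, Finset.mem_filter, not_or,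
      not_and] at hd he
    exact hP.false_of_P3UP2 hxz hzy (hQ.isClique hd.1 he.1 hde) hxy' hxy
      (hd.2.1.1 hd.1) (he.2.1.1 he.1) (hd.2.1.2 hd.1) (he.2.1.2 he.1) (hd.2.2 hd.1) (he.2.2 he.1)
  have hA : 3 ≤ A.card := by
    have := Finset.card_le_card_sdiff_add_card (s := Q) (t := A)
    rw [hQ.card_eq] at this
    omega
  obtain ⟨a, ha, b, hb, c, hc, hab, hac, hbc⟩ :=
    Finset.exists_ne_of_three_le_card_union (hle_one hx) (hle_one hz) (hle_one hy) hA
  rw [Finset.mem_filter] at ha hb hc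
  exact ⟨a, ha.1, b, hb.1, c, hc.1, hab, hac, hbc, ha.2, hb.2, hc.2⟩

theorem adj_of_neighbors_adj {v z w d : V} (hv : v ∉ Q) (hz : z ∉ Q) (hw : w ∉ Q)
    (hzw : z ≠ w) (hvz : G.Adj v z) (hvw : G.Adj v w) (hd : d ∈ Q) (hzd : G.Adj z d)
    (hwd : G.Adj w d) : G.Adj v d := by
  by_contra hvd
  by_cases hzw' : G.Adj z w
  · exact hvd (hD.adj_of_diamondG (fun h => hv (h ▸ hd)) hvz hvw hzd.symm hwd.symm hzw')
  obtain ⟨a, ha, -, -, c, hc, -, hac, -, hza, -, hwc⟩ :=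
    exists_adj_of_induced_path hP hD hK hQ hz hv hw hvz.symm hvw hzw' hzw
  exact hac ((hQ.eq_of_adj_of_adj hD hK hz ha hd hza hzd).trans
    (hQ.eq_of_adj_of_adj hD hK hw hd hc hwd hwc))

theorem exists_adj_ne_of_adj {v x y z a b c : V} (hv : v ∉ Q) (hx : x ∉ Q) (hy : y ∉ Q)
    (hz : z ∉ Q) (hvx : G.Adj v x) (hvy : G.Adj v y) (hvz : G.Adj v z) (hxy : ¬ G.Adj x y)
    (hxy' : x ≠ y) (hzx : z ≠ x) (hzy : z ≠ y) (ha : a ∈ Q) (hb : b ∈ Q) (hc : c ∈ Q)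
    (hab : a ≠ b) (hbc : b ≠ c) (hxa : G.Adj x a) (hvb : G.Adj v b) (hyc : G.Adj y c) :
    ∃ d ∈ Q, G.Adj z d ∧ d ≠ a ∧ d ≠ b ∧ d ≠ c := by
  have hvQ : ∀ u ∈ Q, G.Adj v u → u = b := fun u hu hvu =>
    hQ.eq_of_adj_of_adj hD hK hv hu hb hvu hvb
  obtain ⟨d, hd, hzd, hdb⟩ : ∃ d ∈ Q, G.Adj z d ∧ d ≠ b := by
    by_cases hzxy : G.Adj z x ∧ G.Adj z y
    · obtain ⟨-, -, d, hd, -, -, -, -, -, -, hzd, -⟩ :=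
        exists_adj_of_induced_path hP hD hK hQ hx hz hy hzxy.1.symm hzxy.2 hxy hxy'
      refine ⟨d, hd, hzd, ?_⟩
      rintro rfl
      refine hab (hQ.eq_of_adj_of_adj hD hK hx ha hd hxa ?_)
      exact adj_of_neighbors_adj hP hD hK hQ hx hz hv hvz.ne' hzxy.1.symm hvx.symm hd hzd hvb
    · obtain ⟨w, hw, hvw, hzw, hwz⟩ : ∃ w ∉ Q, G.Adj v w ∧ ¬ G.Adj z w ∧ w ≠ z := by
        rcases not_and_or.1 hzxy with h | h
        exacts [⟨x, hx, hvx, h, hzx.symm⟩, ⟨y, hy, hvy, h, hzy.symm⟩]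
      obtain ⟨-, -, b', hb', d, hd, -, -, hb'd, -, hvb', hzd⟩ :=
        exists_adj_of_induced_path hP hD hK hQ hw hv hz hvw.symm hvz (fun h => hzw h.symm) hwz
      exact ⟨d, hd, hzd, hvQ b' hb' hvb' ▸ hb'd.symm⟩
  refine ⟨d, hd, hzd, ?_, hdb, ?_⟩
  · rintro rfl
    exact hab (hvQ d hd (adj_of_neighbors_adj hP hD hK hQ hv hz hx hzx hvz hvx hd hzd hxa))
  · rintro rfl
    exact hbc (hvQ d hd (adj_of_neighbors_adj hP hD hK hQ hv hz hy hzy hvz hvy hd hzd hyc)).symm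

theorem card_le_three_of_not_adj {v x y : V} {t : Finset V} (hv : v ∉ Q)
    (ht : ∀ u ∈ t, u ∉ Q ∧ G.Adj v u) (hx : x ∈ t) (hy : y ∈ t) (hxy : ¬ G.Adj x y)
    (hxy' : x ≠ y) : t.card ≤ 3 := by
  classical
  obtain ⟨hxQ, hvx⟩ := ht x hx
  obtain ⟨hyQ, hvy⟩ := ht y hy
  obtain ⟨a, ha, b, hb, c, hc, hab, hac, hbc, hxa, hvb, hyc⟩ :=
    exists_adj_of_induced_path hP hD hK hQ hxQ hv hyQ hvx.symm hvy hxy hxy'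
  have habc : ({a, b, c} : Finset V) ⊆ Q := by simp [Finset.insert_subset_iff, ha, hb, hc]
  have hrest : (Q \ {a, b, c}).card ≤ 1 := by
    rw [Finset.card_sdiff_of_subset habc, hQ.card_eq,
      Finset.card_eq_three.2 ⟨a, b, c, hab, hac, hbc, rfl⟩]
  have hsub : ∀ z ∈ t \ {x, y}, ∃ d ∈ Q \ {a, b, c}, G.Adj z d := fun z hz => by
    simp only [Finset.mem_sdiff, Finset.mem_insert, Finset.mem_singleton, not_or] at hz
    obtain ⟨hzQ, hvz⟩ := ht z hz.1
    obtain ⟨d, hd, hzd, hda, hdb, hdc⟩ := exists_adj_ne_of_adj hP hD hK hQ hv hxQ hyQ hzQ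
      hvx hvy hvz hxy hxy' hz.2.1 hz.2.2 ha hb hc hab hbc hxa hvb hyc
    exact ⟨d, by simp [hd, hda, hdb, hdc], hzd⟩
  have hone : (t \ {x, y}).card ≤ 1 := Finset.card_le_one.2 fun z hz w hw => by
    obtain ⟨d, hd, hzd⟩ := hsub z hz
    obtain ⟨e, he, hwe⟩ := hsub w hw
    obtain rfl := Finset.card_le_one.1 hrest d hd e he
    obtain ⟨hzQ, hvz⟩ := ht z (Finset.mem_sdiff.1 hz).1
    obtain ⟨hwQ, hvw⟩ := ht w (Finset.mem_sdiff.1 hw).1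
    rw [Finset.mem_sdiff] at hd
    by_contra hzw
    have hvd := adj_of_neighbors_adj hP hD hK hQ hv hzQ hwQ hzw hvz hvw hd.1 hzd hwe
    exact hd.2 (by simp [hQ.eq_of_adj_of_adj hD hK hv hd.1 hb hvd hvb])
  calc t.card ≤ (t \ {x, y}).card + ({x, y} : Finset V).card := Finset.card_le_card_sdiff_add_card
    _ ≤ 1 + 2 := add_le_add hone Finset.card_le_two

theorem degree_le_four_of_notMem [Fintype V] [DecidableRel G.Adj] {v : V} (hv : v ∉ Q) :
    G.degree v ≤ 4 := by
  classical
  rw [← card_neighborFinset_eq_degree]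
  have hin : (G.neighborFinset v ∩ Q).card ≤ 1 := Finset.card_le_one.2 fun a ha b hb => by
    rw [Finset.mem_inter, mem_neighborFinset] at ha hb
    exact hQ.eq_of_adj_of_adj hD hK hv ha.2 hb.2 ha.1 hb.1
  have hout : (G.neighborFinset v \ Q).card ≤ 3 := by
    set t := G.neighborFinset v \ Q
    have ht : ∀ u ∈ t, u ∉ Q ∧ G.Adj v u := fun u hu => by
      rw [Finset.mem_sdiff, mem_neighborFinset] at hu
      exact hu.symm
    by_cases hcl : G.IsClique (t : Set V)
    · by_contra! h
      have hvt : v ∉ t := fun h => G.irrefl (ht v h).2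
      have hcl' : G.IsClique (insert v t : Finset V) := by
        rw [Finset.coe_insert]
        exact hcl.insert fun u hu _ => (ht u hu).2
      exact hK.mono (by rw [Finset.card_insert_of_notMem hvt]; omega) _ ⟨hcl', rfl⟩
    · obtain ⟨x, hx, y, hy, hxy', hxy⟩ : ∃ x ∈ t, ∃ y ∈ t, x ≠ y ∧ ¬ G.Adj x y := by
        simpa [IsClique, Set.Pairwise] using hcl
      exact card_le_three_of_not_adj hP hD hK hQ hv ht hx hy hxy hxy'
  calc (G.neighborFinset v).card
      = (G.neighborFinset v ∩ Q).card + (G.neighborFinset v \ Q).card :=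
        (Finset.card_inter_add_card_sdiff _ _).symm
    _ ≤ 4 := by omega

end FourClique

end

theorem stmt14 {V : Type*} [Fintype V] (G : SimpleGraph V) (h1 : _root_.Free G P3UP2)
    (h2 : _root_.Free G diamondG) (hω : G.cliqueNum = 4) :
    G.chromaticNumber ≤ (5 : ℕ∞) := by
  classical
  have hK : G.CliqueFree 5 := fun t ht => by
    have := (IsClique.card_le_cliqueNum (tc := ht.isClique))
    rw [ht.card_eq, hω] at this
    omega
  obtain ⟨Q, hQ⟩ := G.exists_isNClique_cliqueNum
  rw [hω] at hQ
  have hcol : G.Colorable (4 + 1) := colorable_succ_of_degree_le_of_notMem Q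
    (hQ.card_eq.trans_le (by norm_num)) fun v hv => degree_le_four_of_notMem h1 h2 hK hQ hv
  exact_mod_cast hcol.chromaticNumber_le
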